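/- arXiv:2402.14387 — 2 statements merged into one kernel-verified Lean document; each statement's English description precedes it below -/
import Mathlib

section
/- Let q be a prime power and n ≤ m. If C ⊆ F_{q^m}^n is an F_{q^m}-linear MRD code of dimension k with k = 1 or k = n−1, then C is equivalent to a Gabidulin code: there exist a matrix A ∈ GL(n,q) (invertible n×n matrix with entries in F_q, viewed inside F_{q^m}) and F_q-linearly independent elements v_1, …, v_n ∈ F_{q^m} such that C·A equals the F_{q^m}-row span of the k×n Moore matrix whose (i,j) entry is v_j^{q^i} for 0 ≤ i ≤ k−1, 1 ≤ j ≤ n. -/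
noncomputable section

/-- The rank weight of a vector `v ∈ K^n` over `F`: the `F`-dimension of the
`F`-span of its coordinates. -/
def rankWeight (F : Type*) {K : Type*} [Field F] [Field K] [Module F K] {n : ℕ}
    (v : Fin n → K) : ℕ :=
  Module.finrank F (Submodule.span F (Set.range v))

namespace MRDAux

open Polynomial Finset

variable {q : ℕ} {F K : Type*} [Field F] [Field K] [Fintype F] [Fintype K] [Algebra F K]

/-- `x ↦ x ^ q ^ s` is a ring homomorphism of `K` when `q = |F|`. -/
lemma exists_qpow_hom (hF : Fintype.card F = q) (s : ℕ) :
    ∃ φ : K →+* K, ∀ x, φ x = x ^ q ^ s := by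
  obtain ⟨p, hp⟩ := CharP.exists F
  haveI := hp
  obtain ⟨e, hpp, hq⟩ := FiniteField.card F p
  haveI : CharP K p := charP_of_injective_algebraMap (algebraMap F K).injective p
  haveI : Fact p.Prime := ⟨hpp⟩
  refine ⟨iterateFrobenius K p (e * s), fun x => ?_⟩
  rw [iterateFrobenius_def, pow_mul, ← hq, hF]

lemma qpow_algebraMap (hF : Fintype.card F = q) (a : F) (s : ℕ) :
    (algebraMap F K a) ^ q ^ s = algebraMap F K a := by
  induction s with
  | zero => simp
  | succ s ih =>
    rw [pow_succ, pow_mul, ih, ← map_pow, ← hF, FiniteField.pow_card]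

/-- A `q`-linearized polynomial of `q`-degree `< t ≤ n` vanishing on `n` `F`-linearly
independent elements has all coefficients zero. -/
lemma linearized_zero (hq : IsPrimePow q) (hF : Fintype.card F = q)
    {n t : ℕ} (htn : t ≤ n) {h : Fin n → K} (hh : LinearIndependent F h)
    (c : ℕ → K) (hc : ∀ j, ∑ s ∈ Finset.range t, c s * h j ^ q ^ s = 0) :
    ∀ s < t, c s = 0 := by
  classical
  rcases Nat.eq_zero_or_pos t with ht0 | ht0
  · intro s hs; omega
  have hq2 : 2 ≤ q := hq.two_le
  set P : Polynomial K := ∑ s ∈ Finset.range t, Polynomial.C (c s) * Polynomial.X ^ (q ^ s)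
    with hP
  have hcoeff : ∀ u < t, P.coeff (q ^ u) = c u := by
    intro u hu
    rw [hP, Polynomial.finset_sum_coeff, Finset.sum_eq_single u]
    · simp
    · intro b hb hbu
      rw [Polynomial.coeff_C_mul, Polynomial.coeff_X_pow, if_neg, mul_zero]
      exact fun hqq => hbu (Nat.pow_right_injective hq2 hqq.symm)
    · intro hu'; exact absurd (Finset.mem_range.mpr hu) hu'
  suffices hP0 : P = 0 by
    intro s hs
    have := hcoeff s hs
    rw [hP0] at this
    simpa using this.symm
  have heval : ∀ a : Fin n → F, P.eval (∑ j, a j • h j) = 0 := by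
    intro a
    have hx : ∀ s : ℕ, (∑ j, a j • h j) ^ q ^ s = ∑ j, a j • h j ^ q ^ s := by
      intro s
      obtain ⟨φ, hφ⟩ := exists_qpow_hom (K := K) hF s
      rw [← hφ, map_sum]
      refine Finset.sum_congr rfl fun j _ => ?_
      rw [Algebra.smul_def, Algebra.smul_def, map_mul, hφ, hφ, qpow_algebraMap hF]
    rw [hP, Polynomial.eval_finset_sum]
    simp only [Polynomial.eval_mul, Polynomial.eval_C, Polynomial.eval_pow, Polynomial.eval_X]
    calc ∑ s ∈ Finset.range t, c s * (∑ j, a j • h j) ^ q ^ s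
        = ∑ s ∈ Finset.range t, ∑ j, a j • (c s * h j ^ q ^ s) := by
          refine Finset.sum_congr rfl fun s _ => ?_
          rw [hx s, Finset.mul_sum]
          exact Finset.sum_congr rfl fun j _ => mul_smul_comm _ _ _
      _ = ∑ j, a j • (∑ s ∈ Finset.range t, c s * h j ^ q ^ s) := by
          rw [Finset.sum_comm]
          exact Finset.sum_congr rfl fun j _ => (Finset.smul_sum).symm
      _ = 0 := by simp [hc]
  have hinj : Function.Injective (fun a : Fin n → F => ∑ j, a j • h j) := by
    intro a b hab
    have hz : ∑ j, (a - b) j • h j = 0 := by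
      simp only [Pi.sub_apply, sub_smul, Finset.sum_sub_distrib]
      simpa using sub_eq_zero.mpr hab
    have := Fintype.linearIndependent_iff.mp hh (a - b) hz
    funext i
    have hi := this i
    simpa [sub_eq_zero] using hi
  by_contra hP0
  have hroots : (Finset.univ.image fun a : Fin n → F => ∑ j, a j • h j).val ⊆ P.roots := by
    intro x hx
    rw [Finset.mem_val, Finset.mem_image] at hx
    obtain ⟨a, -, rfl⟩ := hx
    rw [Polynomial.mem_roots hP0]
    exact heval a
  have hcard := Polynomial.card_le_degree_of_subset_roots hroots
  rw [Finset.card_image_of_injective _ hinj, Finset.card_univ, Fintype.card_fun,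
    Fintype.card_fin, hF] at hcard
  have hdeg : P.natDegree ≤ q ^ (n - 1) := by
    rw [hP]
    refine Polynomial.natDegree_sum_le_of_forall_le _ _ fun s hs => ?_
    refine le_trans (Polynomial.natDegree_C_mul_le _ _) ?_
    rw [Polynomial.natDegree_X_pow]
    exact Nat.pow_le_pow_right (by omega) (by have := Finset.mem_range.mp hs; omega)
  have hlt : q ^ (n - 1) < q ^ n := Nat.pow_lt_pow_right (by omega) (by omega)
  omega

/-- Fin-indexed version of `linearized_zero`. -/
lemma linearized_zero_fin (hq : IsPrimePow q) (hF : Fintype.card F = q)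
    {n t : ℕ} (htn : t ≤ n) {h : Fin n → K} (hh : LinearIndependent F h)
    (c : Fin t → K) (hc : ∀ j, ∑ s : Fin t, c s * h j ^ q ^ (s : ℕ) = 0) :
    ∀ s, c s = 0 := by
  classical
  set c' : ℕ → K := fun s => if hs : s < t then c ⟨s, hs⟩ else 0 with hc'
  have key : ∀ s < t, c' s = 0 := by
    refine linearized_zero hq hF htn hh c' fun j => ?_
    rw [← hc j, ← Fin.sum_univ_eq_sum_range (fun s => c' s * h j ^ q ^ s) t]
    exact Finset.sum_congr rfl fun s _ => by rw [hc']; simp [s.isLt]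
  intro s
  have := key s s.isLt
  rw [hc'] at this
  simpa [s.isLt] using this

end MRDAux

open MRDAux

/-- A linear MRD code in `F_{q^m}^n` (`n ≤ m`) of dimension `1` or `n - 1` is equivalent
to a Gabidulin code: `C·A` is the row span of a Moore matrix for some `A ∈ GL(n, q)` and
`F_q`-linearly independent `v_1, …, v_n ∈ F_{q^m}`. -/
theorem mrd_dim_one_or_coone_is_gabidulin (q m n k d : ℕ) (hq : IsPrimePow q)
    (hnm : n ≤ m)
    (F K : Type*) [Field F] [Field K] [Fintype F] [Fintype K] [Algebra F K]
    (hF : Fintype.card F = q) (hK : Fintype.card K = q ^ m)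
    (C : Submodule K (Fin n → K)) (hC : Module.finrank K ↥C = k)
    (hk : k = 1 ∨ k = n - 1)
    (hd : IsLeast {w | ∃ c ∈ C, c ≠ 0 ∧ w = rankWeight F c} d)
    (hMRD : m * k = max m n * (min m n - d + 1)) :
    ∃ (A : Matrix (Fin n) (Fin n) K) (v : Fin n → K),
      (∀ i j, A i j ∈ (algebraMap F K).range) ∧ IsUnit A ∧
      LinearIndependent F v ∧
      (fun c => Matrix.vecMul c A) '' (C : Set (Fin n → K)) =
        (Submodule.span K
          (Set.range fun i : Fin k => fun j : Fin n => v j ^ q ^ (i : ℕ)) :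
          Set (Fin n → K)) := by
  classical
  obtain ⟨⟨c₀, hc₀C, hc₀ne, hdw⟩, hlb⟩ := hd
  have hm : 0 < m := by
    by_contra hm0
    have hm0' : m = 0 := by omega
    rw [hm0', pow_zero] at hK
    have := Fintype.one_lt_card (α := K)
    omega
  rw [max_eq_left hnm, min_eq_right hnm] at hMRD
  have hfr : Module.finrank K (Fin n → K) = n := by
    rw [Module.finrank_fintype_fun_eq_card, Fintype.card_fin]
  have hkn : k ≤ n := by
    have hfle := Submodule.finrank_le C
    rw [hfr, hC] at hfle
    exact hfle
  have hk1 : 1 ≤ k := by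
    rw [← hC]
    haveI : Nontrivial C := ⟨⟨⟨c₀, hc₀C⟩, 0, by simp [hc₀ne, Subtype.ext_iff]⟩⟩
    exact Module.finrank_pos
  have hone : ∀ i j, (1 : Matrix (Fin n) (Fin n) K) i j ∈ (algebraMap F K).range := by
    intro i j
    by_cases hij : i = j
    · rw [hij, Matrix.one_apply_eq]; exact ⟨1, map_one _⟩
    · rw [Matrix.one_apply_ne hij]; exact ⟨0, map_zero _⟩
  have himg : (fun c : Fin n → K => Matrix.vecMul c (1 : Matrix (Fin n) (Fin n) K)) ''
      (C : Set (Fin n → K)) = C := by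
    have h1 : (fun c : Fin n → K => Matrix.vecMul c (1 : Matrix (Fin n) (Fin n) K)) = id :=
      funext fun c => Matrix.vecMul_one c
    rw [h1, Set.image_id]
  rcases hk with hk | hk
  · -- k = 1
    subst hk
    have hdn : n ≤ d := by
      have h1 : 1 = n - d + 1 := Nat.eq_of_mul_eq_mul_left hm (by simpa using hMRD)
      omega
    have hv : LinearIndependent F c₀ := by
      rw [linearIndependent_iff_card_le_finrank_span]
      rw [Fintype.card_fin]
      have : rankWeight F c₀ = (Set.range c₀).finrank F := rfl
      omega
    have hCspan : Submodule.span K {c₀} = C := by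
      apply Submodule.eq_of_le_of_finrank_eq
      · rw [Submodule.span_le]; simpa using hc₀C
      · rw [finrank_span_singleton hc₀ne, hC]
    refine ⟨1, c₀, hone, isUnit_one, hv, ?_⟩
    rw [himg]
    have hrange : (Set.range fun i : Fin 1 => fun j : Fin n => c₀ j ^ q ^ (i : ℕ)) = {c₀} := by
      have h2 : (fun i : Fin 1 => fun j : Fin n => c₀ j ^ q ^ (i : ℕ)) = fun _ => c₀ := by
        funext i j
        have : (i : ℕ) = 0 := by omega
        simp [this]
      rw [h2, Set.range_const]
    rw [hrange, hCspan]
  · -- k = n - 1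
    have hn2 : 2 ≤ n := by omega
    have hd2 : 2 ≤ d := by
      have h1 : n - 1 = n - d + 1 := Nat.eq_of_mul_eq_mul_left hm (by rw [← hk]; exact hMRD)
      omega
    have hClt : C < ⊤ := by
      rw [lt_top_iff_ne_top]
      intro hCt
      rw [hCt, finrank_top, hfr] at hC
      omega
    obtain ⟨f, hf0, hCf⟩ := C.exists_le_ker_of_lt_top hClt
    set h : Fin n → K := fun j => f (fun j' => if j = j' then (1 : K) else 0) with hhdef
    have hfapply : ∀ x, f x = ∑ j, x j * h j := by
      intro x
      rw [LinearMap.pi_apply_eq_sum_univ f x]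
      simp [hhdef, smul_eq_mul]
    have hCker : C = LinearMap.ker f := by
      apply Submodule.eq_of_le_of_finrank_eq hCf
      have hr : LinearMap.range f = ⊤ := by
        obtain ⟨x₀, hx₀⟩ : ∃ x, f x ≠ 0 := by
          by_contra hx
          push_neg at hx
          exact hf0 (LinearMap.ext fun x => by simp [hx])
        rw [LinearMap.range_eq_top]
        intro y
        refine ⟨(y / f x₀) • x₀, ?_⟩
        rw [map_smul, smul_eq_mul]
        field_simp
      have hrn := LinearMap.finrank_range_add_finrank_ker f
      rw [hr, finrank_top, Module.finrank_self, hfr] at hrn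
      rw [hC, hk]
      omega
    -- h is F-linearly independent
    have hh : LinearIndependent F h := by
      rw [Fintype.linearIndependent_iff]
      intro a ha
      by_contra hex
      push_neg at hex
      obtain ⟨i0, hi0⟩ := hex
      set x : Fin n → K := fun j => algebraMap F K (a j) with hxdef
      have hxC : x ∈ C := by
        rw [hCker, LinearMap.mem_ker, hfapply]
        rw [← ha]
        exact Finset.sum_congr rfl fun j _ => by rw [hxdef, Algebra.smul_def]
      have hxne : x ≠ 0 := by
        intro hx
        apply hi0
        have := congrFun hx i0
        rw [hxdef] at this
        exact (map_eq_zero_iff (algebraMap F K) (algebraMap F K).injective).mp this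
      have hw : rankWeight F x ≤ 1 := by
        have hsub : Submodule.span F (Set.range x) ≤ Submodule.span F {(1 : K)} := by
          rw [Submodule.span_le]
          rintro - ⟨j, rfl⟩
          have hxj : x j = (a j) • (1 : K) := by rw [hxdef, Algebra.smul_def, mul_one]
          rw [hxj]
          exact Submodule.smul_mem _ _ (Submodule.mem_span_singleton_self _)
        calc Module.finrank F (Submodule.span F (Set.range x))
            ≤ Module.finrank F (Submodule.span F {(1 : K)}) := Submodule.finrank_mono hsub
          _ = 1 := finrank_span_singleton one_ne_zero
      have := hlb ⟨x, hxC, hxne, rfl⟩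
      omega
    -- the Moore matrix of h and a kernel vector V
    set M : Matrix (Fin n) (Fin (n - 1)) K := fun j s => h j ^ q ^ (s : ℕ) with hMdef
    have hMinj : Function.Injective M.mulVecLin := by
      rw [← LinearMap.ker_eq_bot, LinearMap.ker_eq_bot']
      intro cvec hcvec
      funext s
      refine linearized_zero_fin hq hF (by omega) hh cvec (fun j => ?_) s
      have hj := congrFun hcvec j
      rw [Matrix.mulVecLin_apply] at hj
      simpa [Matrix.mulVec, dotProduct, hMdef, mul_comm] using hj
    have hrankM : M.rank = n - 1 := by
      rw [Matrix.rank, LinearMap.finrank_range_of_inj hMinj,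
        Module.finrank_fintype_fun_eq_card, Fintype.card_fin]
    set Ψ : (Fin n → K) →ₗ[K] (Fin (n - 1) → K) := M.transpose.mulVecLin with hΨdef
    have hΨapp : ∀ x s, Ψ x s = ∑ j, x j * h j ^ q ^ (s : ℕ) := by
      intro x s
      rw [hΨdef, Matrix.mulVecLin_apply]
      simp [Matrix.mulVec, dotProduct, Matrix.transpose_apply, hMdef, mul_comm]
      rfl
    have hrange : Module.finrank K (LinearMap.range Ψ) = n - 1 := by
      show M.transpose.rank = n - 1
      rw [Matrix.rank_transpose, hrankM]
    have hker1 : Module.finrank K (LinearMap.ker Ψ) = 1 := by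
      have := LinearMap.finrank_range_add_finrank_ker Ψ
      rw [hrange, hfr] at this
      omega
    obtain ⟨V, hVker, hVne⟩ : ∃ V, V ∈ LinearMap.ker Ψ ∧ V ≠ 0 := by
      apply Submodule.exists_mem_ne_zero_of_ne_bot
      intro hbot
      rw [hbot] at hker1
      simp at hker1
    have hVprop : ∀ s : Fin (n - 1), ∑ j, V j * h j ^ q ^ (s : ℕ) = 0 := by
      intro s
      rw [← hΨapp]
      rw [LinearMap.mem_ker] at hVker
      rw [hVker]
      rfl
    have hkerspan : LinearMap.ker Ψ = Submodule.span K {V} := by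
      symm
      apply Submodule.eq_of_le_of_finrank_eq
      · rw [Submodule.span_le]; simpa using hVker
      · rw [finrank_span_singleton hVne, hker1]
    -- V is F-linearly independent
    have hV : LinearIndependent F V := by
      rw [Fintype.linearIndependent_iff]
      intro a ha
      set α : Fin n → K := fun j => algebraMap F K (a j) with hα
      set φα : (Fin n → K) →ₗ[K] K :=
        { toFun := fun x => ∑ j, x j * α j
          map_add' := by intro x y; simp [add_mul, Finset.sum_add_distrib]
          map_smul' := by intro c x; simp [Finset.mul_sum, mul_assoc] } with hφα
      have hφαapp : ∀ x, φα x = ∑ j, x j * α j := fun x => rfl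
      have hkerle : LinearMap.ker Ψ ≤ LinearMap.ker φα := by
        rw [hkerspan, Submodule.span_le, Set.singleton_subset_iff, SetLike.mem_coe,
          LinearMap.mem_ker, hφαapp]
        rw [← ha]
        refine Finset.sum_congr rfl fun j _ => ?_
        rw [hα, Algebra.smul_def, mul_comm]
      obtain ⟨g, hg⟩ := LinearMap.exists_extend
        (((LinearMap.ker Ψ).liftQ φα hkerle).comp
          (LinearMap.quotKerEquivRange Ψ).symm.toLinearMap)
      have hfactor : ∀ x, φα x = g (Ψ x) := by
        intro x
        have h1 : g (Ψ x) = (((LinearMap.ker Ψ).liftQ φα hkerle).comp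
            (LinearMap.quotKerEquivRange Ψ).symm.toLinearMap)
            ⟨Ψ x, LinearMap.mem_range_self _ x⟩ := by
          rw [← hg]; rfl
        rw [h1, LinearMap.comp_apply]
        have h2 : (LinearMap.quotKerEquivRange Ψ).symm ⟨Ψ x, LinearMap.mem_range_self _ x⟩ =
            (LinearMap.ker Ψ).mkQ x := LinearMap.quotKerEquivRange_symm_apply_image Ψ x _
        rw [LinearEquiv.coe_toLinearMap, h2]
        rw [Submodule.mkQ_apply, Submodule.liftQ_apply]
      set γ : ℕ → K := fun s =>
        if hs : s < n - 1 then g (fun s' => if (⟨s, hs⟩ : Fin (n - 1)) = s' then 1 else 0)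
        else 0 with hγ
      have hαeq : ∀ j, α j = ∑ s ∈ Finset.range (n - 1), γ s * h j ^ q ^ s := by
        intro j
        have h2 : α j = φα (fun j' => if j = j' then 1 else 0) := by
          rw [hφαapp]
          simp [Finset.sum_ite_eq]
        have h3 : Ψ (fun j' => if j = j' then (1 : K) else 0) =
            fun s : Fin (n - 1) => h j ^ q ^ (s : ℕ) := by
          funext s
          rw [hΨapp]
          simp [Finset.sum_ite_eq]
        rw [h2, hfactor, h3, LinearMap.pi_apply_eq_sum_univ g]
        rw [← Fin.sum_univ_eq_sum_range (fun s => γ s * h j ^ q ^ s) (n - 1)]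
        refine Finset.sum_congr rfl fun s _ => ?_
        simp only [hγ]
        rw [dif_pos s.isLt]
        simp only [Fin.eta, smul_eq_mul]
        rw [mul_comm]
      obtain ⟨φq, hφq⟩ := exists_qpow_hom (K := K) hF 1
      have hαfix : ∀ j, α j ^ q = α j := by
        intro j
        have := qpow_algebraMap (K := K) hF (a j) 1
        rwa [pow_one] at this
      set b : ℕ → K := fun s => (if s = 0 then 0 else γ (s - 1) ^ q) - γ s with hb
      have hbsum : ∀ j, ∑ s ∈ Finset.range n, b s * h j ^ q ^ s = 0 := by
        intro j
        have hn' : n = (n - 1) + 1 := by omega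
        have e1 : ∑ s ∈ Finset.range n, (if s = 0 then (0 : K) else γ (s - 1) ^ q) *
            h j ^ q ^ s = α j ^ q := by
          rw [hn', Finset.sum_range_succ', if_pos rfl, zero_mul, add_zero]
          conv_rhs => rw [← pow_one q]
          rw [hαeq j, ← hφq, map_sum]
          refine Finset.sum_congr rfl fun s hs => ?_
          rw [if_neg (Nat.succ_ne_zero s), Nat.add_sub_cancel, map_mul, hφq, hφq,
            pow_one q, ← pow_mul, ← pow_succ]
        have e2 : ∑ s ∈ Finset.range n, γ s * h j ^ q ^ s = α j := by
          rw [hn', Finset.sum_range_succ]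
          have hγtop : γ (n - 1) = 0 := by rw [hγ]; simp
          rw [hγtop, zero_mul, add_zero, hαeq j]
        simp only [hb, sub_mul, Finset.sum_sub_distrib]
        rw [e1, e2, hαfix, sub_self]
      have hb0 : ∀ s < n, b s = 0 := linearized_zero hq hF (le_refl n) hh b hbsum
      have hγ0 : ∀ s, s < n - 1 → γ s = 0 := by
        intro s
        induction s with
        | zero =>
          intro _
          have := hb0 0 (by omega)
          rw [hb] at this
          simpa using this
        | succ s ih =>
          intro hs
          have hbs := hb0 (s + 1) (by omega)
          rw [hb] at hbs
          simp only [Nat.succ_ne_zero, if_neg, Nat.add_sub_cancel] at hbs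
          rw [ih (by omega)] at hbs
          have hqne : q ≠ 0 := by have := hq.two_le; omega
          simpa [zero_pow hqne] using hbs
      intro i
      have hαi : α i = 0 := by
        rw [hαeq i]
        exact Finset.sum_eq_zero fun s hs => by
          rw [hγ0 s (Finset.mem_range.mp hs), zero_mul]
      rw [hα] at hαi
      exact (map_eq_zero_iff (algebraMap F K) (algebraMap F K).injective).mp hαi
    -- build v with v j ^ q ^ (n-2) = V j
    obtain ⟨ρ, hρ⟩ := exists_qpow_hom (K := K) (F := F) hF (n - 2)
    have hρsurj : Function.Surjective ρ :=
      Finite.injective_iff_surjective.mp ρ.injective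
    choose v hv using fun j => hρsurj (V j)
    have hvpow : ∀ j, v j ^ q ^ (n - 2) = V j := fun j => by rw [← hρ]; exact hv j
    have hvind : LinearIndependent F v := by
      rw [Fintype.linearIndependent_iff]
      intro a ha
      apply Fintype.linearIndependent_iff.mp hV a
      calc ∑ i, a i • V i = ρ (∑ i, a i • v i) := by
            rw [map_sum]
            refine Finset.sum_congr rfl fun i _ => ?_
            rw [Algebra.smul_def, Algebra.smul_def, map_mul, hρ, hρ,
              qpow_algebraMap hF, hvpow]
        _ = 0 := by rw [ha, map_zero]
    -- Moore rows of v lie in C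
    have hrowC : ∀ i : Fin k, (fun j => v j ^ q ^ (i : ℕ)) ∈ C := by
      intro i
      rw [hCker, LinearMap.mem_ker, hfapply]
      obtain ⟨τ, hτ⟩ := exists_qpow_hom (K := K) (F := F) hF (n - 2 - (i : ℕ))
      have hi : (i : ℕ) ≤ n - 2 := by
        have := i.isLt
        omega
      apply τ.injective
      rw [map_zero, map_sum]
      have hs : n - 2 - (i : ℕ) < n - 1 := by omega
      have hVp := hVprop ⟨n - 2 - (i : ℕ), hs⟩
      rw [← hVp]
      refine Finset.sum_congr rfl fun j _ => ?_
      rw [map_mul, hτ, hτ, ← pow_mul, ← pow_add,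
        show (i : ℕ) + (n - 2 - (i : ℕ)) = n - 2 from by omega, hvpow]
    -- the rows span C
    have hrind : LinearIndependent K (fun i : Fin k => fun j : Fin n => v j ^ q ^ (i : ℕ)) := by
      rw [Fintype.linearIndependent_iff]
      intro c hc i
      refine linearized_zero_fin hq hF (show k ≤ n by omega) hvind c (fun j => ?_) i
      have := congrFun hc j
      simpa [mul_comm] using this
    have hspan : Submodule.span K
        (Set.range fun i : Fin k => fun j : Fin n => v j ^ q ^ (i : ℕ)) = C := by
      apply Submodule.eq_of_le_of_finrank_eq
      · rw [Submodule.span_le]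
        rintro - ⟨i, rfl⟩
        exact hrowC i
      · rw [finrank_span_eq_card hrind, Fintype.card_fin, hC]
    exact ⟨1, v, hone, isUnit_one, hvind, by rw [himg, hspan]⟩
end
end

section
/- Let q be a prime power and let n ∈ {1,2,3} with n ≤ m. If C ⊆ F_{q^m}^n is an F_{q^m}-linear MRD code (of any dimension k ≤ n), then C is equivalent to a Gabidulin code: there exist a matrix A ∈ GL(n,q) and F_q-linearly independent elements v_1, …, v_n ∈ F_{q^m} such that C·A equals the F_{q^m}-row span of the k×n Moore matrix whose (i,j) entry is v_j^{q^i} for 0 ≤ i ≤ k−1, 1 ≤ j ≤ n. -/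
noncomputable section

set_option linter.unusedSectionVars false

section Aux

variable {F K : Type*} [Field F] [Field K] [Fintype F] [Fintype K] [Algebra F K]

lemma exists_qpow_ringHom (F K : Type*) [Field F] [Field K] [Fintype F] [Algebra F K] :
    ∃ σ : K →+* K, ∀ x, σ x = x ^ Fintype.card F := by
  have hp : (ringChar F).Prime := CharP.char_is_prime F _
  haveI := Fact.mk hp
  haveI : CharP K (ringChar F) :=
    charP_of_injective_algebraMap (algebraMap F K).injective _
  obtain ⟨f, _, hf⟩ := FiniteField.card F (ringChar F)
  exact ⟨iterateFrobenius K (ringChar F) f, fun x => by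
    rw [iterateFrobenius_def, hf]⟩

lemma mem_range_of_pow_card {x : K} (hx : x ^ Fintype.card F = x) :
    x ∈ (algebraMap F K).range := by
  classical
  set q := Fintype.card F with hq
  have hq1 : 1 < q := Fintype.one_lt_card
  set P : Polynomial K := Polynomial.X ^ q - Polynomial.X with hP
  have hPne : P ≠ 0 := FiniteField.X_pow_card_sub_X_ne_zero K hq1
  have hdeg : P.natDegree = q := FiniteField.X_pow_card_sub_X_natDegree_eq K hq1
  -- the image of F is contained in the roots of P
  have hsub : (Finset.univ.image (algebraMap F K)) ⊆ P.roots.toFinset := by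
    intro y hy
    obtain ⟨a, -, rfl⟩ := Finset.mem_image.mp hy
    rw [Multiset.mem_toFinset, Polynomial.mem_roots hPne]
    rw [hP]
    simp only [Polynomial.IsRoot, Polynomial.eval_sub, Polynomial.eval_pow, Polynomial.eval_X,
      ← map_pow]
    rw [show a ^ q = a from FiniteField.pow_card a, sub_self]
  have hcard : P.roots.toFinset.card ≤ q := by
    calc P.roots.toFinset.card ≤ Multiset.card P.roots := P.roots.toFinset_card_le
    _ ≤ P.natDegree := P.card_roots'
    _ = q := hdeg
  have himg : (Finset.univ.image (algebraMap F K)).card = q := by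
    rw [Finset.card_image_of_injective _ (algebraMap F K).injective, Finset.card_univ]
  have heq : (Finset.univ.image (algebraMap F K)) = P.roots.toFinset :=
    Finset.eq_of_subset_of_card_le hsub (by omega)
  have hxr : x ∈ P.roots.toFinset := by
    rw [Multiset.mem_toFinset, Polynomial.mem_roots hPne]
    simp [hP, Polynomial.IsRoot, hx]
  rw [← heq] at hxr
  obtain ⟨a, -, rfl⟩ := Finset.mem_image.mp hxr
  exact ⟨a, rfl⟩

lemma rankWeight_le {n : ℕ} (v : Fin n → K) :
    Module.finrank F (Submodule.span F (Set.range v)) ≤ n := by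
  simpa [Set.finrank] using finrank_range_le_card (R := F) v

lemma rankWeight_pos {n : ℕ} {v : Fin n → K} (hv : v ≠ 0) :
    1 ≤ Module.finrank F (Submodule.span F (Set.range v)) := by
  obtain ⟨j, hj⟩ := Function.ne_iff.mp hv
  haveI : FiniteDimensional F (Submodule.span F (Set.range v)) :=
    FiniteDimensional.span_of_finite F (Set.finite_range v)
  rw [Nat.one_le_iff_ne_zero]
  intro h0
  have hbot : Submodule.span F (Set.range v) = ⊥ := Submodule.finrank_eq_zero.mp h0
  have : v j ∈ Submodule.span F (Set.range v) := Submodule.subset_span ⟨j, rfl⟩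
  rw [hbot, Submodule.mem_bot] at this
  exact hj this

set_option linter.unusedSectionVars false

lemma smul_sum_pow_qpow {n : ℕ} (v : Fin n → K) (l : Fin n → F) (e : ℕ) :
    (∑ j, l j • v j) ^ Fintype.card F ^ e = ∑ j, l j • v j ^ Fintype.card F ^ e := by
  obtain ⟨σ, hσ⟩ := exists_qpow_ringHom F K
  induction e with
  | zero => simp
  | succ e ih =>
      have key : ∀ x : K, x ^ Fintype.card F ^ (e + 1) = σ (x ^ Fintype.card F ^ e) := by
        intro x; rw [hσ, ← pow_mul, ← pow_succ]
      rw [key, ih, map_sum]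
      refine Finset.sum_congr rfl fun j _ => ?_
      rw [Algebra.smul_def, map_mul, hσ ((algebraMap F K) (l j)), ← map_pow,
        FiniteField.pow_card, ← key, ← Algebra.smul_def]

lemma moore_linearIndependent {n k : ℕ} (hkn : k ≤ n) {v : Fin n → K}
    (hv : LinearIndependent F v) :
    LinearIndependent K
      (fun i : Fin k => fun j : Fin n => v j ^ Fintype.card F ^ (i : ℕ)) := by
  classical
  set q := Fintype.card F with hqdef
  have hq1 : 1 < q := Fintype.one_lt_card
  rw [Fintype.linearIndependent_iff]
  intro c hc i0
  by_contra hne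
  have hn1 : 1 ≤ n := le_trans (le_trans i0.pos hkn) le_rfl
  have hcj : ∀ j, ∑ i : Fin k, c i * v j ^ q ^ (i : ℕ) = 0 := by
    intro j
    have := congrFun hc j
    simpa using this
  set P : Polynomial K := ∑ i : Fin k, Polynomial.C (c i) * Polynomial.X ^ (q ^ (i : ℕ))
    with hPdef
  have hcoeff : P.coeff (q ^ (i0 : ℕ)) = c i0 := by
    rw [hPdef, Polynomial.finset_sum_coeff]
    rw [Finset.sum_eq_single i0]
    · simp
    · intro i _ hii
      rw [Polynomial.coeff_C_mul, Polynomial.coeff_X_pow, if_neg, mul_zero]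
      intro h
      exact hii (Fin.ext (Nat.pow_right_injective hq1 h.symm))
    · simp
  have hPne : P ≠ 0 := fun h => hne (by rw [← hcoeff, h, Polynomial.coeff_zero])
  have hdeg : P.natDegree ≤ q ^ (n - 1) := by
    refine Polynomial.natDegree_sum_le_of_forall_le _ _ fun i _ => ?_
    refine le_trans (Polynomial.natDegree_C_mul_le _ _) ?_
    rw [Polynomial.natDegree_X_pow]
    exact Nat.pow_le_pow_right (le_of_lt hq1) (by omega : (i : ℕ) ≤ n - 1)
  have hroot : ∀ u ∈ Submodule.span F (Set.range v), P.IsRoot u := by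
    intro u hu
    obtain ⟨l, rfl⟩ := (Submodule.mem_span_range_iff_exists_fun F).mp hu
    have heval : P.eval (∑ j, l j • v j)
        = ∑ i : Fin k, c i * (∑ j, l j • v j) ^ q ^ (i : ℕ) := by
      rw [hPdef, Polynomial.eval_finset_sum]
      simp
    rw [Polynomial.IsRoot, heval]
    have h2 : ∀ i : Fin k, c i * (∑ j, l j • v j) ^ q ^ (i : ℕ)
        = ∑ j, l j • (c i * v j ^ q ^ (i : ℕ)) := by
      intro i
      rw [smul_sum_pow_qpow, Finset.mul_sum]
      exact Finset.sum_congr rfl fun j _ => (mul_smul_comm _ _ _)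
    simp_rw [h2]
    rw [Finset.sum_comm]
    refine Finset.sum_eq_zero fun j _ => ?_
    rw [← Finset.smul_sum, hcj j, smul_zero]
  haveI : FiniteDimensional F (Submodule.span F (Set.range v)) :=
    FiniteDimensional.span_of_finite F (Set.finite_range v)
  have hcardspan : Fintype.card (Submodule.span F (Set.range v)) = q ^ n := by
    rw [Module.card_eq_pow_finrank (K := F), finrank_span_eq_card hv, Fintype.card_fin]
  have hinj : Fintype.card (Submodule.span F (Set.range v)) ≤ P.roots.toFinset.card := by
    rw [← Fintype.card_coe (P.roots.toFinset)]
    refine Fintype.card_le_of_injective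
      (fun x => ⟨x.1, by
        rw [Multiset.mem_toFinset, Polynomial.mem_roots hPne]
        exact hroot x.1 x.2⟩) ?_
    intro a b hab
    exact Subtype.ext (congrArg Subtype.val hab :)
  have hc2 : P.roots.toFinset.card ≤ q ^ (n - 1) :=
    le_trans (le_trans P.roots.toFinset_card_le P.card_roots') hdeg
  have hlt : q ^ (n - 1) < q ^ n := Nat.pow_lt_pow_right hq1 (by omega)
  omega

end Aux

/-- A linear MRD code in `F_{q^m}^n` with `n ∈ {1,2,3}`, `n ≤ m`, is equivalent to a
Gabidulin code: `C·A` is the row span of a Moore matrix for some `A ∈ GL(n, q)` and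
`F_q`-linearly independent `v_1, …, v_n ∈ F_{q^m}`. -/
theorem mrd_short_is_gabidulin (q m n k d : ℕ) (hq : IsPrimePow q)
    (hn : n ∈ ({1, 2, 3} : Set ℕ)) (hnm : n ≤ m) (hkn : k ≤ n)
    (F K : Type*) [Field F] [Field K] [Fintype F] [Fintype K] [Algebra F K]
    (hF : Fintype.card F = q) (hK : Fintype.card K = q ^ m)
    (C : Submodule K (Fin n → K)) (hC : Module.finrank K ↥C = k)
    (hd : IsLeast {w | ∃ c ∈ C, c ≠ 0 ∧ w = rankWeight F c} d)
    (hMRD : m * k = max m n * (min m n - d + 1)) :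
    ∃ (A : Matrix (Fin n) (Fin n) K) (v : Fin n → K),
      (∀ i j, A i j ∈ (algebraMap F K).range) ∧ IsUnit A ∧
      LinearIndependent F v ∧
      (fun c => Matrix.vecMul c A) '' (C : Set (Fin n → K)) =
        (Submodule.span K
          (Set.range fun i : Fin k => fun j : Fin n => v j ^ q ^ (i : ℕ)) :
          Set (Fin n → K)) := by
  simp only [rankWeight] at hd
  classical
  subst hF
  set q := Fintype.card F with hqdef
  have hq1 : 1 < q := Fintype.one_lt_card
  simp only [Set.mem_insert_iff, Set.mem_singleton_iff] at hn
  have hn1 : 1 ≤ n := by rcases hn with h | h | h <;> omega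
  have hn3 : n ≤ 3 := by rcases hn with h | h | h <;> omega
  obtain ⟨c0, hc0C, hc0ne, hc0w⟩ := hd.1
  have hd1 : 1 ≤ d := hc0w ▸ rankWeight_pos hc0ne
  have hdn : d ≤ n := hc0w ▸ rankWeight_le c0
  have hm1 : 1 ≤ m := le_trans hn1 hnm
  have hkd : k = n - d + 1 := by
    rw [Nat.max_eq_left hnm, Nat.min_eq_right hnm] at hMRD
    exact Nat.eq_of_mul_eq_mul_left (by omega) hMRD
  have hk1 : 1 ≤ k := by omega
  have hOneEntries : ∀ i j : Fin n,
      (1 : Matrix (Fin n) (Fin n) K) i j ∈ (algebraMap F K).range := by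
    intro i j
    rw [Matrix.one_apply]
    split
    · exact ⟨1, map_one _⟩
    · exact ⟨0, map_zero _⟩
  have hImgOne : ∀ S : Set (Fin n → K),
      (fun c : Fin n → K => Matrix.vecMul c (1 : Matrix (Fin n) (Fin n) K)) '' S = S := by
    intro S
    have : (fun c : Fin n → K => Matrix.vecMul c (1 : Matrix (Fin n) (Fin n) K)) = id :=
      funext fun c => Matrix.vecMul_one c
    rw [this, Set.image_id]
  by_cases hk : k = 1
  · -- C is spanned by a single full-weight vector
    subst hk
    have hdn' : d = n := by omega
    have hlin : LinearIndependent F c0 := by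
      rw [linearIndependent_iff_card_eq_finrank_span]
      rw [Fintype.card_fin]
      exact (hdn' ▸ hc0w : (n : ℕ) = _)
    refine ⟨1, c0, hOneEntries, isUnit_one, hlin, ?_⟩
    rw [hImgOne]
    have hCspan : C = Submodule.span K {c0} := by
      haveI : FiniteDimensional K C := FiniteDimensional.finiteDimensional_submodule C
      refine (Submodule.eq_of_le_of_finrank_le
        ((Submodule.span_singleton_le_iff_mem _ _).mpr hc0C) ?_).symm
      rw [hC, finrank_span_singleton hc0ne]
    have hrange : (Set.range fun i : Fin 1 => fun j : Fin n => c0 j ^ q ^ (i : ℕ))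
        = {c0} := by
      have : (fun i : Fin 1 => fun j : Fin n => c0 j ^ q ^ (i : ℕ)) = fun _ => c0 := by
        funext i j
        have : (i : ℕ) = 0 := by omega
        rw [this, pow_zero, pow_one]
      rw [this, Set.range_const]
    rw [hrange, hCspan]
  · by_cases hkn' : k = n
    · -- C is the whole space
      subst hkn'
      have hCt : C = ⊤ := by
        apply Submodule.eq_top_of_finrank_eq
        rw [hC, Module.finrank_fin_fun]
      have hfr : Module.finrank F K = m := by
        have h := Module.card_eq_pow_finrank (K := F) (V := K)
        rw [hK] at h
        exact (Nat.pow_right_injective hq1 h.symm)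
      have hkm : k ≤ Module.finrank F K := by omega
      let b := Module.finBasis F K
      let v : Fin k → K := fun j => b (Fin.castLE hkm j)
      have hv : LinearIndependent F v :=
        b.linearIndependent.comp _ (Fin.castLE_injective hkm)
      have hrows := moore_linearIndependent (F := F) (le_refl k) hv
      refine ⟨1, v, hOneEntries, isUnit_one, hv, ?_⟩
      rw [hImgOne, hCt]
      have hsp : Submodule.span K
          (Set.range fun i : Fin k => fun j : Fin k => v j ^ q ^ (i : ℕ)) = ⊤ := by
        apply Submodule.eq_top_of_finrank_eq
        rw [finrank_span_eq_card hrows, Fintype.card_fin, Module.finrank_fin_fun]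
      rw [hsp]
    · -- the hard case : n = 3, k = 2, d = 2
      have hn3' : n = 3 := by omega
      have hk2 : k = 2 := by omega
      have hd2 : d = 2 := by omega
      subst hn3'
      subst hk2
      subst hd2
      obtain ⟨σ, hσ⟩ := exists_qpow_ringHom F K
      have hσbij : Function.Bijective σ :=
        Finite.injective_iff_bijective.mp σ.injective
      have hsurj := hσbij.surjective
      -- the preimage of C under coordinatewise Frobenius
      let C' : Submodule K (Fin 3 → K) :=
        { carrier := {x | (fun j => σ (x j)) ∈ C}
          add_mem' := by
            intro a b ha hb
            show (fun j => σ ((a + b) j)) ∈ C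
            have h : (fun j => σ ((a + b) j)) = (fun j => σ (a j)) + fun j => σ (b j) := by
              funext j; simp
            rw [h]; exact C.add_mem ha hb
          zero_mem' := by
            show (fun j => σ ((0 : Fin 3 → K) j)) ∈ C
            have h : (fun j => σ ((0 : Fin 3 → K) j)) = 0 := by funext j; simp
            rw [h]; exact C.zero_mem
          smul_mem' := by
            intro c x hx
            show (fun j => σ ((c • x) j)) ∈ C
            have h : (fun j => σ ((c • x) j)) = σ c • fun j => σ (x j) := by
              funext j; simp
            rw [h]; exact C.smul_mem _ hx }
      -- C' has the same dimension as C
      let e : C' ≃ C :=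
        { toFun := fun x => ⟨fun j => σ (x.1 j), x.2⟩
          invFun := fun y => ⟨fun j => Function.surjInv hsurj (y.1 j), by
            show (fun j => σ (Function.surjInv hsurj (y.1 j))) ∈ C
            have h : (fun j => σ (Function.surjInv hsurj (y.1 j))) = y.1 := by
              funext j; exact Function.surjInv_eq hsurj _
            rw [h]; exact y.2⟩
          left_inv := fun x => Subtype.ext (funext fun j =>
            hσbij.injective (Function.surjInv_eq hsurj _))
          right_inv := fun y => Subtype.ext (funext fun j => Function.surjInv_eq hsurj _) }
      have hfr' : Module.finrank K C' = 2 := by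
        have hcard : Fintype.card C' = Fintype.card C := Fintype.card_congr e
        rw [Module.card_eq_pow_finrank (K := K) (V := C'), Module.card_eq_pow_finrank (K := K) (V := C),
          hC] at hcard
        exact Nat.pow_right_injective Fintype.one_lt_card hcard
      -- there is a nonzero v with both v and σ(v) in C
      have hinf : 0 < Module.finrank K ↥(C ⊓ C') := by
        have h1 := Submodule.finrank_sup_add_finrank_inf_eq C C'
        have h2 : Module.finrank K ↥(C ⊔ C') ≤ 3 := by
          have h3 := Submodule.finrank_le (C ⊔ C')
          rwa [Module.finrank_fin_fun] at h3
        rw [hC, hfr'] at h1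
        omega
      obtain ⟨x0, hx0⟩ := Module.finrank_pos_iff_exists_ne_zero.mp hinf
      set v : Fin 3 → K := (x0 : Fin 3 → K) with hvdef
      have hv0 : v ≠ 0 := fun h => hx0 (Subtype.ext h)
      have hvC : v ∈ C := x0.2.1
      have hvC' : (fun j => σ (v j)) ∈ C := x0.2.2
      -- weight estimates
      have hwt : ∀ x, x ∈ C → x ≠ 0 →
          2 ≤ Module.finrank F (Submodule.span F (Set.range x)) :=
        fun x hx hxne => hd.2 ⟨x, hx, hxne, rfl⟩
      have hwt1 : ∀ (x : Fin 3 → K) (z : K), z ≠ 0 →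
          (∀ j, ∃ a : F, x j = algebraMap F K a * z) →
          Module.finrank F (Submodule.span F (Set.range x)) ≤ 1 := by
        intro x z hz hx
        haveI : Module.Finite F (Submodule.span F ({z} : Set K)) :=
          FiniteDimensional.span_of_finite F (Set.finite_singleton z)
        have hle : Submodule.span F (Set.range x) ≤ Submodule.span F {z} := by
          rw [Submodule.span_le]
          rintro - ⟨j, rfl⟩
          obtain ⟨a, ha⟩ := hx j
          rw [ha, ← Algebra.smul_def]
          exact Submodule.smul_mem _ _ (Submodule.mem_span_singleton_self z)
        calc Module.finrank F (Submodule.span F (Set.range x))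
            ≤ Module.finrank F (Submodule.span F ({z} : Set K)) :=
              Submodule.finrank_mono hle
          _ = 1 := finrank_span_singleton hz
      obtain ⟨j0, hj0⟩ := Function.ne_iff.mp hv0
      -- the Moore rows attached to v
      set f : Fin 2 → (Fin 3 → K) := fun i => fun j => v j ^ q ^ (i : ℕ) with hfdef
      have hf0 : f 0 = v := by funext j; simp [hfdef]
      have hf1 : f 1 = fun j => σ (v j) := by funext j; simp [hfdef, hσ, pow_one, hqdef]
      have hrows : LinearIndependent K f := by
        rw [Fintype.linearIndependent_iff]
        intro c hcsum
        have hj : ∀ j, c 0 * v j + c 1 * v j ^ q = 0 := by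
          intro j
          have h := congrFun hcsum j
          simpa [hfdef, Fin.sum_univ_two, pow_one] using h
        by_cases hc1 : c 1 = 0
        · have hc0 : c 0 = 0 := by
            have h := hj j0
            rw [hc1, zero_mul, add_zero] at h
            exact (mul_eq_zero.mp h).resolve_right hj0
          intro i; fin_cases i <;> assumption
        · exfalso
          set μ : K := -(c 0) / c 1 with hμ
          have hvq : ∀ j, v j ^ q = μ * v j := by
            intro j
            rw [hμ, div_mul_eq_mul_div, eq_div_iff hc1]
            linear_combination hj j
          have hμ0 : μ ≠ 0 := by
            intro h
            have h2 := hvq j0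
            rw [h, zero_mul, pow_eq_zero_iff (by omega : q ≠ 0)] at h2
            exact hj0 h2
          have hrat : ∀ j, ∃ a : F, v j = algebraMap F K a * v j0 := by
            intro j
            by_cases hvj : v j = 0
            · exact ⟨0, by simp [hvj]⟩
            · have hfix : (v j / v j0) ^ q = v j / v j0 := by
                rw [div_pow, hvq j, hvq j0, mul_div_mul_left _ _ hμ0]
              obtain ⟨a, ha⟩ := mem_range_of_pow_card hfix
              exact ⟨a, by rw [ha, div_mul_cancel₀ _ hj0]⟩
          have h2le := hwt v hvC hv0
          have hle1 := hwt1 v (v j0) hj0 hrat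
          omega
      have hspanle : Submodule.span K (Set.range f) ≤ C := by
        rw [Submodule.span_le]
        rintro - ⟨i, rfl⟩
        fin_cases i
        · exact hf0 ▸ hvC
        · exact hf1 ▸ hvC'
      have hCeq : Submodule.span K (Set.range f) = C := by
        refine Submodule.eq_of_le_of_finrank_le hspanle ?_
        rw [hC, finrank_span_eq_card hrows, Fintype.card_fin]
      -- the coordinates of v are F-linearly independent
      have hvF : LinearIndependent F v := by
        by_contra hnli
        obtain ⟨g, hgsum, j1, hgj1⟩ := Fintype.not_linearIndependent_iff.mp hnli
        have hsum0 : (∑ j, algebraMap F K (g j) * v j) = 0 := by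
          simp_rw [← Algebra.smul_def]
          exact hgsum
        set φ : (Fin 3 → K) →ₗ[K] K :=
          ∑ j, algebraMap F K (g j) • LinearMap.proj j with hφdef
        have hφ : ∀ x : Fin 3 → K, φ x = ∑ j, algebraMap F K (g j) * x j := by
          intro x
          rw [hφdef]
          simp only [LinearMap.sum_apply, LinearMap.smul_apply, LinearMap.proj_apply,
            smul_eq_mul]
        have hφv : φ v = 0 := by rw [hφ]; exact hsum0
        have hφTv : φ (fun j => σ (v j)) = 0 := by
          rw [hφ]
          have h : ∀ j, algebraMap F K (g j) * σ (v j)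
              = σ (algebraMap F K (g j) * v j) := by
            intro j
            rw [map_mul, hσ ((algebraMap F K) (g j)), ← map_pow, FiniteField.pow_card]
          simp_rw [h]
          rw [← map_sum, hsum0, map_zero]
        have hCker : C ≤ LinearMap.ker φ := by
          rw [← hCeq, Submodule.span_le]
          rintro - ⟨i, rfl⟩
          fin_cases i
          · exact LinearMap.mem_ker.mpr (hf0 ▸ hφv)
          · exact LinearMap.mem_ker.mpr (hf1 ▸ hφTv)
        have hφne : φ ≠ 0 := by
          intro h
          have h2 : φ (Pi.single j1 1) = 0 := by rw [h]; rfl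
          have h3 : φ (Pi.single j1 1) = algebraMap F K (g j1) := by
            rw [hφ, Finset.sum_eq_single j1]
            · simp
            · intro b _ hb
              rw [Pi.single_eq_of_ne hb, mul_zero]
            · simp
          rw [h3] at h2
          exact hgj1 ((algebraMap F K).injective (by simpa using h2))
        have hker2 : Module.finrank K (LinearMap.ker φ) = 2 := by
          have h1 := LinearMap.finrank_range_add_finrank_ker φ
          rw [Module.finrank_fin_fun] at h1
          have hr1 : Module.finrank K (LinearMap.range φ) = 1 := by
            have hle : Module.finrank K (LinearMap.range φ) ≤ 1 := by
              have h4 := Submodule.finrank_le (LinearMap.range φ)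
              rwa [Module.finrank_self] at h4
            have hpos : 0 < Module.finrank K (LinearMap.range φ) := by
              apply Module.finrank_pos_iff_exists_ne_zero.mpr
              obtain ⟨a, ha⟩ := DFunLike.ne_iff.mp hφne
              exact ⟨⟨φ a, LinearMap.mem_range_self φ a⟩, fun h =>
                ha (by simpa using congrArg Subtype.val h)⟩
            omega
          omega
        have hCkereq : C = LinearMap.ker φ :=
          Submodule.eq_of_le_of_finrank_le hCker (by rw [hC, hker2])
        -- produce a weight-one codeword, contradiction
        have hex : ∃ f' : Fin 3 → F, f' ≠ 0 ∧ ∑ j, g j * f' j = 0 := by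
          by_cases hg0 : g 0 = 0
          · refine ⟨Pi.single 0 1, ?_, ?_⟩
            · intro h
              have h3 := congrFun h 0
              rw [Pi.single_eq_same, Pi.zero_apply] at h3
              exact one_ne_zero h3
            · rw [Finset.sum_eq_single 0]
              · simp [hg0]
              · intro b _ hb
                rw [Pi.single_eq_of_ne hb, mul_zero]
              · simp
          · refine ⟨![g 1, -(g 0), 0], ?_, ?_⟩
            · intro h
              have h2 := congrFun h 1
              simp at h2
              exact hg0 h2
            · simp [Fin.sum_univ_three]
              ring
        obtain ⟨f', hf'ne, hf'sum⟩ := hex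
        set x : Fin 3 → K := fun j => algebraMap F K (f' j) with hxdef
        have hxC : x ∈ C := by
          rw [hCkereq, LinearMap.mem_ker, hφ]
          have hterm : ∀ j : Fin 3, algebraMap F K (g j) * x j
              = algebraMap F K (g j * f' j) := by
            intro j; rw [hxdef, map_mul]
          simp_rw [hterm]
          rw [← map_sum, hf'sum, map_zero]
        have hxne : x ≠ 0 := by
          obtain ⟨j2, hj2⟩ := Function.ne_iff.mp hf'ne
          intro h
          have h2 := congrFun h j2
          exact hj2 ((algebraMap F K).injective
            (by rw [hxdef] at h2; simpa using h2))
        have h2le := hwt x hxC hxne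
        have hle1 := hwt1 x 1 one_ne_zero (fun j => ⟨f' j, by simp [hxdef]⟩)
        omega
      refine ⟨1, v, hOneEntries, isUnit_one, hvF, ?_⟩
      rw [hImgOne]
      exact congrArg _ hCeq.symm
end
end
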